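/- Every regularly total productive context-free grammar is total: if g is a productive grammar over a terminal type T and g is regularly total, then g.initial generates every nonempty word w : List T. -/

import Mathlib

/-!
Since `T₀` has the rules `T₀ → a` and `T₀ → a T₀`, it generates every nonempty word. A word
`a :: v` that is too long for the hypothesis on `S` splits as `v = u ++ v'` with `|u| = n` and `v'`
nonempty, and `S → a Y T₀` derives it with `Y` generating `u` and `T₀` generating `v'`.
-/

/-- The nonterminal `X` generates the word `w` in the grammar `g`. -/
def GeneratesFrom {T : Type*} (g : ContextFreeGrammar T) (X : g.NT) (w : List T) : Prop :=
  g.Derives [Symbol.nonterminal X] (w.map Symbol.terminal)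

/-- Every rule of `g` has a terminal symbol in its output. -/
def IsProductive {T : Type*} (g : ContextFreeGrammar T) : Prop :=
  ∀ r ∈ g.rules, ∃ a : T, Symbol.terminal a ∈ r.output

/-- The initial nonterminal of `g` generates every nonempty word. -/
def IsTotalCFG {T : Type*} (g : ContextFreeGrammar T) : Prop :=
  ∀ w : List T, w ≠ [] → GeneratesFrom g g.initial w

/-- `g` is regularly total. -/
def IsRegularlyTotal {T : Type*} (g : ContextFreeGrammar T) : Prop :=
  ∃ Y T₀ : g.NT,
    (∀ a : T,
      (⟨g.initial, [Symbol.terminal a, Symbol.nonterminal Y, Symbol.nonterminal T₀]⟩ :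
        ContextFreeRule T g.NT) ∈ g.rules ∧
      (⟨T₀, [Symbol.terminal a]⟩ : ContextFreeRule T g.NT) ∈ g.rules ∧
      (⟨T₀, [Symbol.terminal a, Symbol.nonterminal T₀]⟩ : ContextFreeRule T g.NT) ∈ g.rules) ∧
    ∃ n : ℕ, 0 < n ∧
      (∀ w : List T, w ≠ [] → w.length ≤ n + 1 → GeneratesFrom g g.initial w) ∧
      (∀ w : List T, w.length = n → GeneratesFrom g Y w)

namespace ContextFreeGrammar

variable {T : Type*} {g : ContextFreeGrammar T}

lemma derives_of_mem_rules {r : ContextFreeRule T g.NT} (hr : r ∈ g.rules) :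
    g.Derives [.nonterminal r.input] r.output :=
  Produces.single ⟨r, hr, ContextFreeRule.Rewrites.input_output⟩

lemma Derives.append {u u' v v' : List (Symbol T g.NT)} (hu : g.Derives u u')
    (hv : g.Derives v v') : g.Derives (u ++ v) (u' ++ v') :=
  (hu.append_right v).trans (hv.append_left u')

end ContextFreeGrammar

section

open ContextFreeGrammar

variable {T : Type*} {g : ContextFreeGrammar T}

lemma generatesFrom_of_ne_nil {X : g.NT}
    (hX : ∀ a : T, (⟨X, [.terminal a]⟩ : ContextFreeRule T g.NT) ∈ g.rules ∧
      (⟨X, [.terminal a, .nonterminal X]⟩ : ContextFreeRule T g.NT) ∈ g.rules) :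
    ∀ w : List T, w ≠ [] → GeneratesFrom g X w
  | [a], _ => derives_of_mem_rules (hX a).1
  | a :: b :: w, _ => by
    have hbw := (generatesFrom_of_ne_nil hX (b :: w) (List.cons_ne_nil b w)).append_left
      [.terminal a]
    exact (derives_of_mem_rules (hX a).2).trans hbw

lemma generatesFrom_cons_append {X Y Z : g.NT} {a : T} {u v : List T}
    (hr : (⟨X, [.terminal a, .nonterminal Y, .nonterminal Z]⟩ : ContextFreeRule T g.NT) ∈ g.rules)
    (hu : GeneratesFrom g Y u) (hv : GeneratesFrom g Z v) :
    GeneratesFrom g X (a :: (u ++ v)) := by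
  have hYZ := (hu.append hv).append_left [.terminal a]
  simpa [GeneratesFrom] using (derives_of_mem_rules hr).trans hYZ

end

theorem total_of_regularlyTotal_general {T : Type*} (g : ContextFreeGrammar T)
    (hr : IsRegularlyTotal g) : IsTotalCFG g := by
  obtain ⟨Y, T₀, hrules, n, -, hS, hY⟩ := hr
  have hT₀ := generatesFrom_of_ne_nil fun a ↦ (hrules a).2
  intro w hw
  obtain hshort | hlong := le_or_gt w.length (n + 1)
  · exact hS w hw hshort
  obtain ⟨a, v, rfl⟩ := List.exists_cons_of_ne_nil hw
  replace hlong : n < v.length := by simpa using hlong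
  rw [← List.take_append_drop n v]
  refine generatesFrom_cons_append (hrules a).1 (hY _ ?_) (hT₀ _ ?_)
  · simpa using hlong.le
  · simpa [List.drop_eq_nil_iff] using hlong

/-- Every regularly total productive context-free grammar is total. -/
theorem total_of_regularlyTotal {T : Type*} (g : ContextFreeGrammar T)
    (hp : IsProductive g) (hr : IsRegularlyTotal g) : IsTotalCFG g :=
  total_of_regularlyTotal_general g hr
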